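/- arXiv:1407.1650 — 2 statements merged into one kernel-verified Lean document; each statement's English description precedes it below -/
import Mathlib

section
/- Lower semicontinuity of the measure-LP value: define p*(t₀,x₀) as the infimum of ∫ l dμ + ∫ l_T dμ_T over pairs (μ, μ_T) of nonnegative Borel measures on [0,T]×X×U and {T}×X_T satisfying the weak Liouville equation with right-hand side δ_{t₀}⊗δ_{x₀}. Then the function (t₀,x₀) ↦ p*(t₀,x₀) is lower semicontinuous on [0,T] × X (with value +∞ where the LP is infeasible). -/
/-!
Feasibility at `(t₀, x₀)` forces the masses: testing the Liouville equation against `w = 1` and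
`w = t` gives `μT(univ) = 1` and `μ(univ) = T - t₀`. So for all initial points in `[0, T] × X`
the feasible pairs lie in one weak-* compact set of finite measures supported on
`[0, T] × X × U` and `{T} × XT`. On that set integrals of continuous functions, hence the cost and
both sides of the Liouville equation, depend continuously on the measures, and the constraint
`t ≥ t₀` survives weak limits (test against `(t₀ - t)⁺`). Thus the feasibility relation has a
closed graph with values in a fixed compact set, and the infimum of a continuous cost over such a
relation is lower semicontinuous: near-optimal pairs at nearby points accumulate at a feasible pair
for the limit point.
-/

open MeasureTheory Set Filter Topology BoundedContinuousFunction

theorem lowerSemicontinuousOn_sInf_image_of_isCompact {Z M : Type*} [TopologicalSpace Z]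
    [TopologicalSpace M] {S : Set Z} {K : Set M} (hK : IsCompact K) {P : Z → M → Prop}
    {c : M → EReal} (hc : ContinuousOn c K) (hPK : ∀ z ∈ S, ∀ m, P z m → m ∈ K)
    (hP : ∀ z ∈ S, ∀ m ∈ K, (z, m) ∈ closure {p : Z × M | p.1 ∈ S ∧ P p.1 p.2} → P z m) :
    LowerSemicontinuousOn (fun z => sInf (c '' {m | P z m})) S := by
  intro z₀ hz₀ y hy
  by_contra hne
  obtain ⟨y', hyy', hy'⟩ := exists_between hy
  set A := {p : Z × M | p.1 ∈ S ∧ P p.1 p.2 ∧ c p.2 < y'}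
  have hfreq : ∃ᶠ z in 𝓝 z₀, ∃ m ∈ K, (z, m) ∈ A := by
    refine ((not_eventually.1 hne).and_eventually self_mem_nhdsWithin).filter_mono
      nhdsWithin_le_nhds |>.mono fun z ⟨hzy, hzS⟩ => ?_
    obtain ⟨_, ⟨m, hm, rfl⟩, hmy⟩ := sInf_lt_iff.1 ((not_lt.1 hzy).trans_lt hyy')
    exact ⟨m, hPK z hzS m hm, hzS, hm, hmy⟩
  obtain ⟨m₀, hm₀K, hm₀⟩ : ∃ m₀ ∈ K, (z₀, m₀) ∈ closure A := by
    by_contra! hnot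
    have := hK.eventually_forall_of_forall_eventually (P := fun z m => (z, m) ∉ A)
      fun m hm => by simpa [mem_closure_iff_frequently] using hnot m hm
    exact hfreq (this.mono fun z hz ⟨m, hm, hzm⟩ => hz m hm hzm)
  have hfeas : P z₀ m₀ :=
    hP z₀ hz₀ m₀ hm₀K (closure_mono (fun _ hp => And.intro hp.1 hp.2.1) hm₀)
  have hcost : c m₀ ≤ y' := by
    have hm₀' : m₀ ∈ closure (Prod.snd '' A) :=
      image_closure_subset_closure_image continuous_snd (mem_image_of_mem _ hm₀)
    have hAK : Prod.snd '' A ⊆ K := by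
      rintro _ ⟨p, hp, rfl⟩
      exact hPK p.1 hp.1 p.2 hp.2.1
    refine isClosed_Iic.closure_subset_iff.2 ?_ (((hc m₀ hm₀K).mono hAK).mem_closure_image hm₀')
    rintro _ ⟨_, ⟨p, hp, rfl⟩, rfl⟩
    exact hp.2.2.le
  exact (sInf_le (mem_image_of_mem c hfeas)).trans hcost |>.trans_lt hy' |>.false

theorem IsCompact.exists_boundedContinuousFunction_eqOn {Ω : Type*} [TopologicalSpace Ω]
    {K : Set Ω} (hK : IsCompact K) {g : Ω → ℝ} (hg : Continuous g) :
    ∃ gb : Ω →ᵇ ℝ, EqOn g gb K := by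
  obtain ⟨C, hC⟩ := hK.exists_bound_of_continuousOn hg.continuousOn
  obtain ⟨C', hC', hgC'⟩ : ∃ C' ≥ 0, ∀ x ∈ K, ‖g x‖ ≤ C' :=
    ⟨max C 0, le_max_right C 0, fun x hx => (hC x hx).trans (le_max_left C 0)⟩
  refine ⟨.ofNormedAddCommGroup (fun x => max (-C') (min C' (g x))) (by fun_prop) C'
    fun x => abs_le.2 ⟨le_max_left _ _, max_le (by linarith) (min_le_left _ _)⟩, fun x hx => ?_⟩
  obtain ⟨h₁, h₂⟩ := abs_le.1 (hgC' x hx)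
  simp [min_eq_right h₂, max_eq_right h₁]

namespace MeasureTheory.FiniteMeasure

variable {Ω : Type*} [TopologicalSpace Ω] [MeasurableSpace Ω] [OpensMeasurableSpace Ω]

lemma continuousOn_integral_of_isCompact {K : Set Ω} (hK : IsCompact K) {g : Ω → ℝ}
    (hg : Continuous g) :
    ContinuousOn (fun μ : FiniteMeasure Ω => ∫ x, g x ∂(μ : Measure Ω)) {μ | μ Kᶜ = 0} := by
  obtain ⟨gb, hgb⟩ := hK.exists_boundedContinuousFunction_eqOn hg
  refine (continuous_integral_boundedContinuousFunction gb).continuousOn.congr fun μ hμ => ?_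
  refine integral_congr_ae (hgb.eventuallyEq_of_mem (mem_ae_iff.2 ?_))
  exact (null_iff_toMeasure_null μ Kᶜ).1 hμ

lemma ae_le_of_tendsto {ι : Type*} {F : Filter ι} [F.NeBot] {μs : ι → FiniteMeasure Ω}
    {μ : FiniteMeasure Ω} {φ : Ω → ℝ} (hφ : Continuous φ) {a : ι → ℝ} {a₀ : ℝ}
    (hμ : Tendsto μs F (𝓝 μ)) (ha : Tendsto a F (𝓝 a₀))
    (hle : ∀ᶠ i in F, ∀ᵐ x ∂(μs i : Measure Ω), a i ≤ φ x) :
    ∀ᵐ x ∂(μ : Measure Ω), a₀ ≤ φ x := by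
  -- `g` vanishes exactly where `a₀ ≤ φ`, and `∫ g ∂μs i ≤ (a₀ - a i)⁺ * mass (μs i) → 0`.
  let g : Ω →ᵇ ℝ := .ofNormedAddCommGroup (fun x => min (max (a₀ - φ x) 0) 1) (by fun_prop) 1
    fun x => abs_le.2 ⟨by linarith [le_min (le_max_right (a₀ - φ x) 0) zero_le_one],
      min_le_right _ _⟩
  have hg₀ : ∀ x, 0 ≤ g x := fun x => le_min (le_max_right _ _) zero_le_one
  have hbound : ∀ᶠ i in F, ∫ x, g x ∂(μs i : Measure Ω) ≤ max (a₀ - a i) 0 * (μs i).mass := by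
    filter_upwards [hle] with i hi
    calc ∫ x, g x ∂(μs i : Measure Ω) ≤ ∫ _, max (a₀ - a i) 0 ∂(μs i : Measure Ω) :=
          integral_mono_ae (g.integrable _) (integrable_const _) <| hi.mono fun x hx =>
            (min_le_left _ _).trans (max_le_max_right 0 (by linarith))
      _ = max (a₀ - a i) 0 * (μs i).mass := by
          rw [integral_const, smul_eq_mul, mul_comm]; rfl
  have hlim : Tendsto (fun i => max (a₀ - a i) 0 * ((μs i).mass : ℝ)) F (𝓝 0) := by
    simpa using ((tendsto_const_nhds (x := a₀)).sub ha |>.max (tendsto_const_nhds (x := (0 : ℝ))))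
      |>.mul (NNReal.continuous_coe.tendsto _ |>.comp hμ.mass)
  have hint : ∫ x, g x ∂(μ : Measure Ω) = 0 :=
    le_antisymm (le_of_tendsto_of_tendsto (tendsto_iff_forall_integral_tendsto.1 hμ g) hlim
      hbound) (integral_nonneg hg₀)
  filter_upwards [(integral_eq_zero_iff_of_nonneg hg₀ (g.integrable _)).1 hint]
    with x (hx : min (max (a₀ - φ x) 0) 1 = 0)
  by_contra! hlt
  exact (lt_min (lt_max_of_lt_left (sub_pos.2 hlt)) one_pos).ne' hx

end MeasureTheory.FiniteMeasure

section LPCost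

variable {E V : Type*} [TopologicalSpace E] [MeasurableSpace E] [TopologicalSpace V]
  [MeasurableSpace V]

noncomputable def lpCost (l : E → V → ℝ) (lT : E → ℝ) (μ : Measure (ℝ × E × V))
    (μT : Measure (ℝ × E)) : ℝ :=
  ∫ p, l p.2.1 p.2.2 ∂μ + ∫ q, lT q.2 ∂μT

variable [OpensMeasurableSpace (ℝ × E × V)] [OpensMeasurableSpace (ℝ × E)]

lemma continuousOn_lpCost {l : E → V → ℝ} {lT : E → ℝ}
    (hl : Continuous fun p : E × V => l p.1 p.2) (hlT : Continuous lT) {K : Set (ℝ × E × V)}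
    {KT : Set (ℝ × E)} (hK : IsCompact K) (hKT : IsCompact KT) :
    ContinuousOn
      (fun P : FiniteMeasure (ℝ × E × V) × FiniteMeasure (ℝ × E) => lpCost l lT P.1 P.2)
      ({ν | ν Kᶜ = 0} ×ˢ {ν | ν KTᶜ = 0}) :=
  ((FiniteMeasure.continuousOn_integral_of_isCompact hK (by fun_prop)).comp continuousOn_fst
    fun _ h => h.1).add
  ((FiniteMeasure.continuousOn_integral_of_isCompact hKT (by fun_prop)).comp continuousOn_snd
    fun _ h => h.2)

end LPCost

section LiouvilleLP

variable {E V : Type*} [NormedAddCommGroup E] [NormedSpace ℝ E] [MeasurableSpace E]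
  [MeasurableSpace V]

def SolvesLiouville (f : E → V → E) (z : ℝ × E) (μ : Measure (ℝ × E × V))
    (μT : Measure (ℝ × E)) : Prop :=
  ∀ w : ℝ × E → ℝ, ContDiff ℝ 1 w →
    (∫ q, w q ∂μT) - w z = ∫ p, fderiv ℝ w (p.1, p.2.1) (1, f p.2.1 p.2.2) ∂μ

def IsLiouvilleFeasible (X XT : Set E) (U : Set V) (f : E → V → E) (T : ℝ) (z : ℝ × E)
    (μ : Measure (ℝ × E × V)) (μT : Measure (ℝ × E)) : Prop :=
  (∀ᵐ p ∂μ, p.1 ∈ Icc z.1 T ∧ p.2.1 ∈ X ∧ p.2.2 ∈ U) ∧ (∀ᵐ q ∂μT, q.1 = T ∧ q.2 ∈ XT) ∧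
    SolvesLiouville f z μ μT

variable {f : E → V → E} {z : ℝ × E} {X XT : Set E} {U : Set V} {T : ℝ}

lemma SolvesLiouville.measureReal_univ {μ : Measure (ℝ × E × V)} {μT : Measure (ℝ × E)}
    [IsFiniteMeasure μT] (h : SolvesLiouville f z μ μT)
    (hT : ∀ᵐ q ∂μT, q.1 = T) : μT.real univ = 1 ∧ μ.real univ = T - z.1 := by
  have h₁ : μT.real univ = 1 := by
    simpa [sub_eq_zero] using h (fun _ => 1) contDiff_const
  have h₂ := h Prod.fst contDiff_fst
  simp only [integral_congr_ae hT, integral_const, smul_eq_mul, mul_one, h₁, one_mul,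
    fderiv_fst, ContinuousLinearMap.coe_fst'] at h₂
  exact ⟨h₁, h₂.symm⟩

lemma IsLiouvilleFeasible.mass_le_and_null_compl {μ : FiniteMeasure (ℝ × E × V)}
    {μT : FiniteMeasure (ℝ × E)} (h : IsLiouvilleFeasible X XT U f T z μ μT) (hz : 0 ≤ z.1) :
    (μ.mass ≤ T.toNNReal ∧ μ (Icc 0 T ×ˢ X ×ˢ U)ᶜ = 0) ∧
      (μT.mass ≤ 1 ∧ μT ({T} ×ˢ XT)ᶜ = 0) := by
  obtain ⟨hμ, hμT, hL⟩ := h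
  obtain ⟨hmassT, hmass⟩ := hL.measureReal_univ (hμT.mono fun q hq => hq.1)
  refine ⟨⟨?_, ?_⟩, ?_, ?_⟩
  · exact NNReal.le_toNNReal_of_coe_le (hmass.trans_le (by linarith))
  · exact (FiniteMeasure.null_iff_toMeasure_null _ _).2
      (ae_iff.1 (hμ.mono fun p hp => ⟨⟨hz.trans hp.1.1, hp.1.2⟩, hp.2⟩))
  · exact NNReal.coe_le_coe.1 hmassT.le
  · exact (FiniteMeasure.null_iff_toMeasure_null _ _).2
      (ae_iff.1 (hμT.mono fun q hq => ⟨hq.1, hq.2⟩))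

variable [TopologicalSpace V] [OpensMeasurableSpace (ℝ × E × V)] [OpensMeasurableSpace (ℝ × E)]

lemma SolvesLiouville.of_tendsto (hf : Continuous fun p : E × V => f p.1 p.2)
    {K : Set (ℝ × E × V)} {KT : Set (ℝ × E)} (hK : IsCompact K) (hKT : IsCompact KT)
    {ι : Type*} {F : Filter ι} [F.NeBot] {zs : ι → ℝ × E} {μs : ι → FiniteMeasure (ℝ × E × V)}
    {μTs : ι → FiniteMeasure (ℝ × E)} {μ : FiniteMeasure (ℝ × E × V)}
    {μT : FiniteMeasure (ℝ × E)} (hz : Tendsto zs F (𝓝 z))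
    (hμ : Tendsto μs F (𝓝[{ν | ν Kᶜ = 0}] μ)) (hμT : Tendsto μTs F (𝓝[{ν | ν KTᶜ = 0}] μT))
    (hμK : μ Kᶜ = 0) (hμTK : μT KTᶜ = 0)
    (h : ∀ᶠ i in F, SolvesLiouville f (zs i) (μs i) (μTs i)) :
    SolvesLiouville f z μ μT := by
  intro w hw
  have hLw : Continuous fun p : ℝ × E × V => fderiv ℝ w (p.1, p.2.1) (1, f p.2.1 p.2.2) := by
    have := hw.continuous_fderiv one_ne_zero
    fun_prop
  have hlimT := ((FiniteMeasure.continuousOn_integral_of_isCompact hKT hw.continuous)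
    |>.continuousWithinAt hμTK).tendsto.comp hμT
  have hlim := ((FiniteMeasure.continuousOn_integral_of_isCompact hK hLw)
    |>.continuousWithinAt hμK).tendsto.comp hμ
  exact tendsto_nhds_unique ((hlimT.sub ((hw.continuous.tendsto z).comp hz)).congr'
    (h.mono fun i hi => hi w hw)) hlim

lemma IsLiouvilleFeasible.of_mem_closure (hX : IsCompact X) (hXT : IsCompact XT)
    (hU : IsCompact U) (hf : Continuous fun p : E × V => f p.1 p.2) {S : Set (ℝ × E)}
    (hS : ∀ z ∈ S, 0 ≤ z.1) {μ : FiniteMeasure (ℝ × E × V)} {μT : FiniteMeasure (ℝ × E)}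
    (hμ : μ (Icc 0 T ×ˢ X ×ˢ U)ᶜ = 0) (hμT : μT ({T} ×ˢ XT)ᶜ = 0)
    (hcl : (z, (μ, μT)) ∈ closure
      {p : (ℝ × E) × FiniteMeasure (ℝ × E × V) × FiniteMeasure (ℝ × E) |
        p.1 ∈ S ∧ IsLiouvilleFeasible X XT U f T p.1 p.2.1 p.2.2}) :
    IsLiouvilleFeasible X XT U f T z μ μT := by
  have := mem_closure_iff_nhdsWithin_neBot.1 hcl
  set F := 𝓝[_] (z, (μ, μT))
  have hA : ∀ᶠ p in F, p.1 ∈ S ∧ IsLiouvilleFeasible X XT U f T p.1 p.2.1 p.2.2 :=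
    self_mem_nhdsWithin
  have hsupp := hA.mono fun p hp =>
    (hp.2.mass_le_and_null_compl (hS _ hp.1)).imp And.right And.right
  have hzs : Tendsto Prod.fst F (𝓝 z) := (continuous_fst.tendsto _).mono_left nhdsWithin_le_nhds
  have hμs : Tendsto (fun p => p.2.1) F (𝓝 μ) :=
    (continuous_fst.comp continuous_snd |>.tendsto _).mono_left nhdsWithin_le_nhds
  have hμTs : Tendsto (fun p => p.2.2) F (𝓝 μT) :=
    (continuous_snd.comp continuous_snd |>.tendsto _).mono_left nhdsWithin_le_nhds
  refine ⟨?_, ?_, ?_⟩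
  · have hlow := FiniteMeasure.ae_le_of_tendsto continuous_fst hμs
      ((continuous_fst.tendsto _).comp hzs) (hA.mono fun p hp => hp.2.1.mono fun q hq => hq.1.1)
    filter_upwards [hlow, mem_ae_iff.2 ((FiniteMeasure.null_iff_toMeasure_null _ _).1 hμ)]
      with p hp ⟨⟨_, hpT⟩, hpXU⟩
    exact ⟨⟨hp, hpT⟩, hpXU⟩
  · filter_upwards [mem_ae_iff.2 ((FiniteMeasure.null_iff_toMeasure_null _ _).1 hμT)]
      with q ⟨hqT, hqXT⟩
    exact ⟨hqT, hqXT⟩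
  · exact SolvesLiouville.of_tendsto hf (isCompact_Icc.prod (hX.prod hU))
      (isCompact_singleton.prod hXT) hzs
      (tendsto_nhdsWithin_iff.2 ⟨hμs, hsupp.mono fun _ h => h.1⟩)
      (tendsto_nhdsWithin_iff.2 ⟨hμTs, hsupp.mono fun _ h => h.2⟩) hμ hμT
      (hA.mono fun p hp => hp.2.2.2)

end LiouvilleLP

theorem measure_LP_value_lsc_general
    {n m : ℕ} (X XT : Set (Fin n → ℝ)) (U : Set (Fin m → ℝ))
    (hX : IsCompact X) (hXT : IsCompact XT) (hU : IsCompact U)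
    (l : (Fin n → ℝ) → (Fin m → ℝ) → ℝ)
    (hl : Continuous fun p : (Fin n → ℝ) × (Fin m → ℝ) => l p.1 p.2)
    (lT : (Fin n → ℝ) → ℝ) (hlT : Continuous lT)
    (f : (Fin n → ℝ) → (Fin m → ℝ) → (Fin n → ℝ))
    (hf : Continuous fun p : (Fin n → ℝ) × (Fin m → ℝ) => f p.1 p.2)
    (T : ℝ)
    (pstar : ℝ × (Fin n → ℝ) → EReal)
    (hpstar : ∀ t₀ x₀, pstar (t₀, x₀) =
      sInf {c : EReal |
        ∃ (μ : Measure (ℝ × (Fin n → ℝ) × (Fin m → ℝ)))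
          (μT : Measure (ℝ × (Fin n → ℝ))),
          IsFiniteMeasure μ ∧ IsFiniteMeasure μT ∧
          (∀ᵐ p ∂μ, p.1 ∈ Icc t₀ T ∧ p.2.1 ∈ X ∧ p.2.2 ∈ U) ∧
          (∀ᵐ q ∂μT, q.1 = T ∧ q.2 ∈ XT) ∧
          (∀ w : ℝ × (Fin n → ℝ) → ℝ, ContDiff ℝ 1 w →
            (∫ q, w q ∂μT) - w (t₀, x₀) =
              ∫ p, fderiv ℝ w (p.1, p.2.1) (1, f p.2.1 p.2.2) ∂μ) ∧
          c = (((∫ p, l p.2.1 p.2.2 ∂μ) + ∫ q, lT q.2 ∂μT : ℝ) : EReal)}) :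
    LowerSemicontinuousOn pstar (Icc (0:ℝ) T ×ˢ X) := by
  have hK : IsCompact (Icc 0 T ×ˢ X ×ˢ U) := isCompact_Icc.prod (hX.prod hU)
  have hKT : IsCompact ({T} ×ˢ XT) := isCompact_singleton.prod hXT
  have hpstar_eq : pstar = fun z => sInf ((fun P => (lpCost l lT P.1 P.2 : EReal)) ''
      {P : FiniteMeasure (ℝ × (Fin n → ℝ) × (Fin m → ℝ)) × FiniteMeasure (ℝ × (Fin n → ℝ)) |
        IsLiouvilleFeasible X XT U f T z P.1 P.2}) := by
    funext ⟨t, x⟩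
    rw [hpstar]
    congr 1
    ext c
    constructor
    · rintro ⟨μ, μT, hμ, hμT, h₁, h₂, h₃, rfl⟩
      exact ⟨(⟨μ, hμ⟩, ⟨μT, hμT⟩), ⟨h₁, h₂, h₃⟩, rfl⟩
    · rintro ⟨⟨μ, μT⟩, ⟨h₁, h₂, h₃⟩, rfl⟩
      exact ⟨μ, μT, inferInstance, inferInstance, h₁, h₂, h₃, rfl⟩
  rw [hpstar_eq]
  refine lowerSemicontinuousOn_sInf_image_of_isCompact
    ((isCompact_setOfPred_finiteMeasure_le_of_isCompact T.toNNReal hK).prod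
      (isCompact_setOfPred_finiteMeasure_le_of_isCompact 1 hKT))
    (continuous_coe_real_ereal.comp_continuousOn ((continuousOn_lpCost hl hlT hK hKT).mono
      (prod_mono (fun _ h => h.2) fun _ h => h.2))) ?_ ?_
  · rintro z ⟨⟨hz, -⟩, -⟩ P hP
    exact hP.mass_le_and_null_compl hz
  · rintro z - ⟨μ, μT⟩ ⟨⟨-, hμ⟩, -, hμT⟩ hcl
    exact IsLiouvilleFeasible.of_mem_closure hX hXT hU hf (fun z hz => hz.1.1) hμ hμT hcl

/-- lower semicontinuity of the value `p*` of the measure LP (with value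
`+∞`, i.e. `⊤` in `EReal`, where the LP is infeasible, since `sInf ∅ = ⊤`). -/
theorem measure_LP_value_lsc
    {n m : ℕ} (X XT : Set (Fin n → ℝ)) (U : Set (Fin m → ℝ))
    (hX : IsCompact X) (hXT : IsCompact XT) (hXTX : XT ⊆ X) (hU : IsCompact U)
    (l : (Fin n → ℝ) → (Fin m → ℝ) → ℝ)
    (hl : Continuous fun p : (Fin n → ℝ) × (Fin m → ℝ) => l p.1 p.2)
    (lT : (Fin n → ℝ) → ℝ) (hlT : Continuous lT)
    (f : (Fin n → ℝ) → (Fin m → ℝ) → (Fin n → ℝ))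
    (hf : Continuous fun p : (Fin n → ℝ) × (Fin m → ℝ) => f p.1 p.2)
    (T : ℝ) (hT : 0 ≤ T)
    (pstar : ℝ × (Fin n → ℝ) → EReal)
    (hpstar : ∀ t₀ x₀, pstar (t₀, x₀) =
      sInf {c : EReal |
        ∃ (μ : Measure (ℝ × (Fin n → ℝ) × (Fin m → ℝ)))
          (μT : Measure (ℝ × (Fin n → ℝ))),
          IsFiniteMeasure μ ∧ IsFiniteMeasure μT ∧
          (∀ᵐ p ∂μ, p.1 ∈ Icc t₀ T ∧ p.2.1 ∈ X ∧ p.2.2 ∈ U) ∧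
          (∀ᵐ q ∂μT, q.1 = T ∧ q.2 ∈ XT) ∧
          (∀ w : ℝ × (Fin n → ℝ) → ℝ, ContDiff ℝ 1 w →
            (∫ q, w q ∂μT) - w (t₀, x₀) =
              ∫ p, fderiv ℝ w (p.1, p.2.1) (1, f p.2.1 p.2.2) ∂μ) ∧
          c = (((∫ p, l p.2.1 p.2.2 ∂μ) + ∫ q, lT q.2 ∂μT : ℝ) : EReal)}) :
    LowerSemicontinuousOn pstar (Icc (0:ℝ) T ×ˢ X) :=
  measure_LP_value_lsc_general X XT U hX hXT hU l hl lT hlT f hf T pstar hpstar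
end

section
/- Dirac right-hand side forces trajectory concentration in dimension 0 of control (uncontrolled case): let f : ℝⁿ → ℝⁿ be Lipschitz, X ⊆ ℝⁿ compact invariant under the flow on [t₀,T], and let x(·) be the unique solution of ẋ = f(x), x(t₀) = x₀ ∈ X. If μ is a nonnegative Borel measure on [t₀,T] × X and μ_T a nonnegative measure on {T} × X satisfying ∫ w dμ_T − w(t₀,x₀) = ∫ (∂w/∂t + ∇w · f) dμ for all C¹ test functions w, and the time marginal of μ is Lebesgue measure on [t₀,T], then μ = dt ⊗ δ_{x(t)} and μ_T = δ_T ⊗ δ_{x(T)}. -/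
/-!
The squared distance `V(t, y) = e^{-ct} |y - x(t)|²` to the characteristic curve vanishes at
`(t₀, x₀)`, and for `c = 2nK` its transport derivative `∂ₜV + ∇V · f` is nonpositive, by the
Lipschitz bound on `f`. Testing the Liouville equation with `V` gives `∫ V dμT ≤ 0`, so `μT` sits on
`(T, x(T))`; testing with `(T - t) V`, which vanishes at the final time, gives `∫ V dμ ≤ 0`, so `μ`
sits on the graph of `x`, and its time marginal then determines it.
-/

open MeasureTheory Set

section Transport

variable {E : Type*} [NormedAddCommGroup E] [NormedSpace ℝ E]

/-- The Liouville operator `w ↦ ∂w/∂t + ∇ₓw · f` on functions of `(t, x)`. -/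
noncomputable def transportDeriv (f : E → E) (w : ℝ × E → ℝ) (p : ℝ × E) : ℝ :=
  fderiv ℝ w p (1, f p.2)

variable {f : E → E} {w : ℝ × E → ℝ} {p : ℝ × E}

theorem transportDeriv_eq_of_hasLineDerivAt {d : ℝ} (hw : DifferentiableAt ℝ w p)
    (h : HasLineDerivAt ℝ w d p (1, f p.2)) : transportDeriv f w p = d :=
  (hw.hasFDerivAt.hasLineDerivAt _).unique h

theorem transportDeriv_mul {a b : ℝ × E → ℝ} (ha : DifferentiableAt ℝ a p)
    (hb : DifferentiableAt ℝ b p) :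
    transportDeriv f (fun q => a q * b q) p =
      a p * transportDeriv f b p + b p * transportDeriv f a p := by
  simp [transportDeriv, fderiv_fun_mul ha hb]

theorem transportDeriv_const_sub_fst (T : ℝ) : transportDeriv f (fun q => T - q.1) p = -1 := by
  simp [transportDeriv, fderiv_const_sub, fderiv_fst]

theorem ContDiff.continuous_transportDeriv (hw : ContDiff ℝ 1 w) (hf : Continuous f) :
    Continuous (transportDeriv f w) :=
  (hw.continuous_fderiv one_ne_zero).clm_apply (continuous_const.prodMk (hf.comp continuous_snd))

theorem contDiff_one_of_hasDerivAt {x : ℝ → E} (hf : Continuous f)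
    (hx : ∀ t, HasDerivAt x (f (x t)) t) : ContDiff ℝ 1 x := by
  have hxd : Differentiable ℝ x := fun t => (hx t).differentiableAt
  rw [contDiff_one_iff_deriv, funext fun t => (hx t).deriv]
  exact ⟨hxd, hf.comp hxd.continuous⟩

end Transport

section TrackingError

variable {ι : Type*} [Fintype ι]

theorem norm_sq_le_sum_sq (u : ι → ℝ) : ‖u‖ ^ 2 ≤ ∑ i, u i ^ 2 := by
  have hsum : 0 ≤ ∑ i, u i ^ 2 := Finset.sum_nonneg fun i _ => sq_nonneg (u i)
  refine (Real.le_sqrt (norm_nonneg u) hsum).1 ((pi_norm_le_iff_of_nonneg (Real.sqrt_nonneg _)).2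
    fun i => ?_)
  exact Real.abs_le_sqrt (Finset.single_le_sum (fun j _ => sq_nonneg (u j)) (Finset.mem_univ i))

theorem sum_mul_le_card_mul_norm_mul_norm (u v : ι → ℝ) :
    ∑ i, u i * v i ≤ Fintype.card ι * (‖u‖ * ‖v‖) := by
  calc ∑ i, u i * v i ≤ ∑ _i : ι, ‖u‖ * ‖v‖ := Finset.sum_le_sum fun i _ =>
        (le_abs_self _).trans <| by
          rw [abs_mul]; exact mul_le_mul (norm_le_pi_norm u i) (norm_le_pi_norm v i)
            (abs_nonneg _) (norm_nonneg _)
    _ = Fintype.card ι * (‖u‖ * ‖v‖) := by simp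

theorem LipschitzWith.sum_sub_mul_sub_le {f : (ι → ℝ) → ι → ℝ} {K : NNReal}
    (hf : LipschitzWith K f) (y z : ι → ℝ) :
    ∑ i, (y i - z i) * (f y i - f z i) ≤ Fintype.card ι * K * ∑ i, (y i - z i) ^ 2 := by
  have hK : ‖f y - f z‖ ≤ K * ‖y - z‖ := hf.norm_sub_le y z
  calc ∑ i, (y i - z i) * (f y i - f z i) ≤ Fintype.card ι * (‖y - z‖ * ‖f y - f z‖) :=
        sum_mul_le_card_mul_norm_mul_norm (y - z) (f y - f z)
    _ ≤ Fintype.card ι * K * ‖y - z‖ ^ 2 := by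
        nlinarith [norm_nonneg (y - z), mul_le_mul_of_nonneg_left hK (norm_nonneg (y - z))]
    _ ≤ Fintype.card ι * K * ∑ i, (y i - z i) ^ 2 := by
        gcongr; exact norm_sq_le_sum_sq (y - z)

theorem HasDerivAt.sum_sq {γ : ℝ → ι → ℝ} {γ' : ι → ℝ} {s : ℝ} (h : HasDerivAt γ γ' s) :
    HasDerivAt (fun s => ∑ i, γ s i ^ 2) (∑ i, 2 * γ s i * γ' i) s :=
  HasDerivAt.fun_sum fun i _ => by simpa using (hasDerivAt_pi.1 h i).fun_pow 2

noncomputable def trackingError (c : ℝ) (x : ℝ → ι → ℝ) (p : ℝ × (ι → ℝ)) : ℝ :=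
  Real.exp (-c * p.1) * ∑ i, (p.2 i - x p.1 i) ^ 2

variable {c : ℝ} {x : ℝ → ι → ℝ}

theorem trackingError_nonneg (c : ℝ) (x : ℝ → ι → ℝ) : 0 ≤ trackingError c x :=
  fun _ => mul_nonneg (Real.exp_pos _).le (Finset.sum_nonneg fun _ _ => sq_nonneg _)

theorem trackingError_eq_zero_iff {p : ℝ × (ι → ℝ)} : trackingError c x p = 0 ↔ p.2 = x p.1 := by
  simp [trackingError, Real.exp_ne_zero, funext_iff, sub_eq_zero,
    Finset.sum_eq_zero_iff_of_nonneg (fun i _ => sq_nonneg _)]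

theorem ContDiff.trackingError (c : ℝ) (hx : ContDiff ℝ 1 x) : ContDiff ℝ 1 (trackingError c x) :=
  (Real.contDiff_exp.comp (contDiff_const.mul contDiff_fst)).mul <|
    ContDiff.sum fun i _ =>
      ((contDiff_apply ℝ ℝ i).comp (contDiff_snd.sub (hx.comp contDiff_fst))).pow 2

theorem hasLineDerivAt_trackingError {f : (ι → ℝ) → ι → ℝ}
    (hx : ∀ t, HasDerivAt x (f (x t)) t) (p : ℝ × (ι → ℝ)) :
    HasLineDerivAt ℝ (trackingError c x)
      (Real.exp (-c * p.1) * (-c * ∑ i, (p.2 i - x p.1 i) ^ 2 +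
        2 * ∑ i, (p.2 i - x p.1 i) * (f p.2 i - f (x p.1) i))) p (1, f p.2) := by
  have htime : HasDerivAt (fun s : ℝ => p.1 + s) 1 0 := (hasDerivAt_id 0).const_add p.1
  have hdamp : HasDerivAt (fun s => Real.exp (-c * (p.1 + s))) (Real.exp (-c * p.1) * -c) 0 := by
    simpa using (htime.const_mul (-c)).exp
  have hdev : HasDerivAt (fun s : ℝ => p.2 + s • f p.2 - x (p.1 + s)) (f p.2 - f (x p.1)) 0 := by
    have hcurve : HasDerivAt (fun s => x (p.1 + s)) (f (x p.1)) 0 := by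
      simpa [Function.comp_def] using (hx (p.1 + 0)).scomp 0 htime
    simpa using (((hasDerivAt_id (0 : ℝ)).smul_const (f p.2)).const_add p.2).fun_sub hcurve
  have h := hdamp.fun_mul hdev.sum_sq
  simp only [zero_smul, add_zero, Pi.sub_apply, Pi.add_apply] at h
  refine (h.congr_deriv ?_).congr_of_eventuallyEq (Filter.Eventually.of_forall fun s => ?_)
  · simp only [mul_assoc, ← Finset.mul_sum]
    ring
  · simp [trackingError]

theorem transportDeriv_trackingError_nonpos {f : (ι → ℝ) → ι → ℝ} {K : NNReal}
    (hf : LipschitzWith K f) (hx : ∀ t, HasDerivAt x (f (x t)) t) (p : ℝ × (ι → ℝ)) :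
    transportDeriv f (trackingError (2 * Fintype.card ι * K) x) p ≤ 0 := by
  have hx' : ContDiff ℝ 1 x := contDiff_one_of_hasDerivAt hf.continuous hx
  rw [transportDeriv_eq_of_hasLineDerivAt ((hx'.trackingError _).differentiable one_ne_zero p)
    (hasLineDerivAt_trackingError hx p)]
  refine mul_nonpos_of_nonneg_of_nonpos (Real.exp_pos _).le ?_
  linarith [hf.sum_sub_mul_sub_le p.2 (x p.1)]

end TrackingError

namespace MeasureTheory

variable {α : Type*} [MeasurableSpace α]

theorem Continuous.integrable_of_ae_mem_isCompact [TopologicalSpace α] [T2Space α]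
    [OpensMeasurableSpace α] {μ : Measure α} [IsFiniteMeasure μ] {F : Type*}
    [NormedAddCommGroup F] {g : α → F} (hg : Continuous g) {S : Set α} (hS : IsCompact S)
    (hμ : ∀ᵐ p ∂μ, p ∈ S) : Integrable g μ := by
  rw [← Measure.restrict_eq_self_of_ae_mem hμ]
  exact hg.continuousOn.integrableOn_compact hS

theorem Measure.eq_dirac_of_ae_eq {μ : Measure α} {a : α} (hμ : μ univ = 1)
    (h : ∀ᵐ q ∂μ, q = a) : μ = dirac a := by
  calc μ = μ.map id := map_id.symm
    _ = μ.map fun _ => a := map_congr h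
    _ = dirac a := by rw [map_const, hμ, one_smul]

theorem Measure.eq_map_graph_of_ae_eq {β : Type*} [MeasurableSpace β] {μ : Measure (α × β)}
    {g : α → β} (hg : Measurable g) (h : ∀ᵐ p ∂μ, p.2 = g p.1) :
    μ = (μ.map Prod.fst).map fun a => (a, g a) := by
  rw [map_map (by fun_prop) measurable_fst]
  calc μ = μ.map id := map_id.symm
    _ = μ.map ((fun a => (a, g a)) ∘ Prod.fst) := map_congr (h.mono fun p hp => Prod.ext rfl hp)

end MeasureTheory

section Liouville

variable {E : Type*} [NormedAddCommGroup E] [NormedSpace ℝ E] [MeasurableSpace E]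

/-- Weak Liouville equation with initial datum `δ_{(t₀, x₀)}`; `μ` is the occupation measure and
`μT` the final measure. -/
structure IsLiouvilleSolution (f : E → E) (t₀ : ℝ) (x₀ : E) (μ μT : Measure (ℝ × E)) : Prop where
  liouville : ∀ w : ℝ × E → ℝ, ContDiff ℝ 1 w →
    (∫ q, w q ∂μT) - w (t₀, x₀) = ∫ p, transportDeriv f w p ∂μ

variable {f : E → E} {t₀ : ℝ} {x₀ : E} {μ μT : Measure (ℝ × E)}
  {V : ℝ × E → ℝ}

namespace IsLiouvilleSolution

theorem measure_univ_eq_one (h : IsLiouvilleSolution f t₀ x₀ μ μT) : μT univ = 1 := by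
  have h1 := h.liouville (fun _ => 1) contDiff_const
  simp only [transportDeriv, fderiv_fun_const, Pi.zero_apply, zero_apply,
    integral_zero, integral_const, smul_eq_mul, mul_one, sub_eq_zero, measureReal_def] at h1
  exact (ENNReal.toReal_eq_one_iff _).1 h1

theorem final_ae_eq_zero (h : IsLiouvilleSolution f t₀ x₀ μ μT) (hV : ContDiff ℝ 1 V)
    (hV0 : 0 ≤ V) (hVx₀ : V (t₀, x₀) = 0) (hLV : ∀ p, transportDeriv f V p ≤ 0)
    (hVi : Integrable V μT) : V =ᵐ[μT] 0 := by
  have hle : ∫ q, V q ∂μT ≤ 0 := by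
    have hV_eq := h.liouville V hV
    rw [hVx₀, sub_zero] at hV_eq
    exact hV_eq ▸ integral_nonpos hLV
  exact (integral_eq_zero_iff_of_nonneg hV0 hVi).1 (le_antisymm hle (integral_nonneg hV0))

theorem occupation_ae_eq_zero (h : IsLiouvilleSolution f t₀ x₀ μ μT) (hV : ContDiff ℝ 1 V)
    (hV0 : 0 ≤ V) (hVx₀ : V (t₀, x₀) = 0) (hLV : ∀ p, transportDeriv f V p ≤ 0) {T : ℝ}
    (hμT : ∀ᵐ q ∂μT, q.1 = T) (hμ : ∀ᵐ p ∂μ, p.1 ≤ T) (hVi : Integrable V μ)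
    (hwi : Integrable (transportDeriv f fun p => (T - p.1) * V p) μ) : V =ᵐ[μ] 0 := by
  set w : ℝ × E → ℝ := fun p => (T - p.1) * V p
  have hw : ContDiff ℝ 1 w := (contDiff_const.sub contDiff_fst).mul hV
  have hLw : ∀ p, transportDeriv f w p = (T - p.1) * transportDeriv f V p - V p := fun p => by
    rw [transportDeriv_mul (by fun_prop) (hV.differentiable one_ne_zero p),
      transportDeriv_const_sub_fst]
    ring
  have hwT : ∫ q, w q ∂μT = 0 := integral_eq_zero_of_ae (hμT.mono fun q hq => by simp [w, hq])
  have hLw0 : ∫ p, transportDeriv f w p ∂μ = 0 := by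
    rw [← h.liouville w hw, hwT]
    simp [w, hVx₀]
  have hle : ∫ p, V p ∂μ ≤ 0 := by
    calc ∫ p, V p ∂μ ≤ ∫ p, -transportDeriv f w p ∂μ :=
          integral_mono_ae hVi hwi.neg (hμ.mono fun p hp => by
            simp only [hLw]
            nlinarith [hLV p])
      _ = 0 := by rw [integral_neg, hLw0, neg_zero]
  exact (integral_eq_zero_iff_of_nonneg hV0 hVi).1 (le_antisymm hle (integral_nonneg hV0))

end IsLiouvilleSolution

end Liouville

theorem liouville_dirac_uniqueness_general
    {n : ℕ} (X : Set (Fin n → ℝ)) (hX : IsCompact X)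
    (f : (Fin n → ℝ) → (Fin n → ℝ)) (K : NNReal) (hf : LipschitzWith K f)
    (t₀ T : ℝ) (x₀ : Fin n → ℝ)
    -- the unique solution of the Cauchy problem
    (x : ℝ → Fin n → ℝ) (hode : ∀ t, HasDerivAt x (f (x t)) t)
    (hini : x t₀ = x₀)
    -- measure solution of the Liouville equation
    (μ : Measure (ℝ × (Fin n → ℝ))) [IsFiniteMeasure μ]
    (μT : Measure (ℝ × (Fin n → ℝ))) [IsFiniteMeasure μT]
    (hμsupp : ∀ᵐ p ∂μ, p.1 ∈ Icc t₀ T ∧ p.2 ∈ X)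
    (hμTsupp : ∀ᵐ q ∂μT, q.1 = T ∧ q.2 ∈ X)
    (hliouville : ∀ w : ℝ × (Fin n → ℝ) → ℝ, ContDiff ℝ 1 w →
      (∫ q, w q ∂μT) - w (t₀, x₀) = ∫ p, fderiv ℝ w p (1, f p.2) ∂μ)
    -- time marginal of μ is Lebesgue measure on [t₀, T]
    (hmarg : μ.map Prod.fst = volume.restrict (Icc t₀ T)) :
    μ = Measure.map (fun t => (t, x t)) (volume.restrict (Icc t₀ T)) ∧
      μT = Measure.dirac (T, x T) := by
  have hsol : IsLiouvilleSolution f t₀ x₀ μ μT := ⟨hliouville⟩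
  have hx : ContDiff ℝ 1 x := contDiff_one_of_hasDerivAt hf.continuous hode
  set V := trackingError (2 * Fintype.card (Fin n) * K) x
  have hV : ContDiff ℝ 1 V := hx.trackingError _
  have hVx₀ : V (t₀, x₀) = 0 := trackingError_eq_zero_iff.2 hini.symm
  have hLV := transportDeriv_trackingError_nonpos hf hode
  have hμ_int : ∀ g : ℝ × (Fin n → ℝ) → ℝ, Continuous g → Integrable g μ := fun g hg =>
    hg.integrable_of_ae_mem_isCompact (isCompact_Icc.prod hX) hμsupp
  have hμT_V : V =ᵐ[μT] 0 := hsol.final_ae_eq_zero hV (trackingError_nonneg _ _) hVx₀ hLV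
    (hV.continuous.integrable_of_ae_mem_isCompact (isCompact_singleton.prod hX) hμTsupp)
  have hμ_V : V =ᵐ[μ] 0 := hsol.occupation_ae_eq_zero hV (trackingError_nonneg _ _) hVx₀ hLV
    (hμTsupp.mono fun q hq => hq.1) (hμsupp.mono fun p hp => hp.1.2) (hμ_int V hV.continuous)
    (hμ_int _ (((contDiff_const.sub contDiff_fst).mul hV).continuous_transportDeriv hf.continuous))
  constructor
  · rw [← hmarg]
    exact Measure.eq_map_graph_of_ae_eq hx.continuous.measurable
      (hμ_V.mono fun p hp => trackingError_eq_zero_iff.1 hp)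
  · refine Measure.eq_dirac_of_ae_eq hsol.measure_univ_eq_one ?_
    filter_upwards [hμT_V, hμTsupp] with q hq hqT
    exact Prod.ext hqT.1 (by rw [trackingError_eq_zero_iff.1 hq, hqT.1])

/-- uniqueness for the Liouville equation in the uncontrolled case: with a
Lipschitz vector field and a compact flow-invariant set `X`, any nonnegative measure
solution `(μ, μ_T)` of the weak Liouville equation with Dirac initial data whose time
marginal is Lebesgue measure on `[t₀,T]` is concentrated on the unique characteristic
curve: `μ = dt ⊗ δ_{x(t)}` and `μ_T = δ_{(T,x(T))}`. -/
theorem liouville_dirac_uniqueness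
    {n : ℕ} (X : Set (Fin n → ℝ)) (hX : IsCompact X)
    (f : (Fin n → ℝ) → (Fin n → ℝ)) (K : NNReal) (hf : LipschitzWith K f)
    (t₀ T : ℝ) (ht : t₀ ≤ T) (x₀ : Fin n → ℝ) (hx₀ : x₀ ∈ X)
    -- X is invariant under the flow on [t₀, T]
    (hinv : ∀ y : ℝ → Fin n → ℝ, (∀ t, HasDerivAt y (f (y t)) t) →
      y t₀ ∈ X → ∀ t ∈ Icc t₀ T, y t ∈ X)
    -- the unique solution of the Cauchy problem
    (x : ℝ → Fin n → ℝ) (hode : ∀ t, HasDerivAt x (f (x t)) t)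
    (hini : x t₀ = x₀)
    -- measure solution of the Liouville equation
    (μ : Measure (ℝ × (Fin n → ℝ))) [IsFiniteMeasure μ]
    (μT : Measure (ℝ × (Fin n → ℝ))) [IsFiniteMeasure μT]
    (hμsupp : ∀ᵐ p ∂μ, p.1 ∈ Icc t₀ T ∧ p.2 ∈ X)
    (hμTsupp : ∀ᵐ q ∂μT, q.1 = T ∧ q.2 ∈ X)
    (hliouville : ∀ w : ℝ × (Fin n → ℝ) → ℝ, ContDiff ℝ 1 w →
      (∫ q, w q ∂μT) - w (t₀, x₀) = ∫ p, fderiv ℝ w p (1, f p.2) ∂μ)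
    -- time marginal of μ is Lebesgue measure on [t₀, T]
    (hmarg : μ.map Prod.fst = volume.restrict (Icc t₀ T)) :
    μ = Measure.map (fun t => (t, x t)) (volume.restrict (Icc t₀ T)) ∧
      μT = Measure.dirac (T, x T) :=
  liouville_dirac_uniqueness_general X hX f K hf t₀ T x₀ x hode hini μ μT hμsupp hμTsupp hliouville
    hmarg
end
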